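/- Suppose the path selection function m_q selects exactly the important paths from any set of paths, and define P̂^{(0)}_{u⇝v} = {self-loop at u} if u = v else ∅, and P̂^{(t)}_{u⇝v} = ∪_{(x,r,v) ∈ E(v)} { P + (x,r,v) : P ∈ m_q(P̂^{(t-1)}_{u⇝x}) }. Assume a path of length t > 0 is important only if its length-(t-1) prefix is important, and paths of length 0 are important. Then P̂^{(t)}_{u⇝v} equals the set of paths of length t whose length-(t-1) prefix is important, i.e. the union of important paths of length t and paths differing from important paths only in the last hop. -/

import Mathlib

/-- `IsWalk src tgt u v l` : the list of edges `l` forms a path from `u` to `v`;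
the empty path exists only when `u = v`. -/
def IsWalk {V E : Type*} (src tgt : E → V) : V → V → List E → Prop
  | u, v, [] => u = v
  | u, v, e :: l => src e = u ∧ IsWalk src tgt (tgt e) v l

/-- The iteratively selected path sets:
`P̂⁽⁰⁾_{u⇝v}` is the self-loop (empty) path if `u = v`, else `∅`, and
`P̂⁽ᵗ⁾_{u⇝v} = ∪_{e ∈ E(v)} { P ++ [e] : P ∈ m_q(P̂⁽ᵗ⁻¹⁾_{u⇝src e}) }`,
where `m_q` selects exactly the important paths (`Imp`). -/
def Phat {V E : Type*} (src tgt : E → V) (Imp : List E → Prop) (u : V) :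
    ℕ → V → Set (List E)
  | 0, v => {l | u = v ∧ l = []}
  | t + 1, v => {l | ∃ (P : List E) (e : E),
      tgt e = v ∧ P ∈ Phat src tgt Imp u t (src e) ∧ Imp P ∧ l = P ++ [e]}

lemma isWalk_append_singleton {V E : Type*} (src tgt : E → V) (u v : V)
    (P : List E) (e : E) :
    IsWalk src tgt u v (P ++ [e]) ↔ IsWalk src tgt u (src e) P ∧ tgt e = v := by
  induction P generalizing u with
  | nil => simp [IsWalk]; tauto
  | cons f l ih => simp [IsWalk, ih]; tauto

/-- If paths of length `0` are important and a path of positive length is important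
only if its prefix (obtained by dropping the last hop) is important, then
`P̂⁽ᵗ⁾_{u⇝v}` equals the set of paths of length `t` from `u` to `v` whose
length-`(t-1)` prefix is important, i.e. the union of important paths of length `t`
and paths differing from important paths only in the last hop. -/
theorem phat_eq_paths_with_important_prefix
    {V E : Type*} [Fintype V] [Fintype E]
    (src tgt : E → V) (Imp : List E → Prop) (u : V)
    (hnil : Imp ([] : List E))
    (hprefix : ∀ (l : List E) (e : E), Imp (l ++ [e]) → Imp l) :
    ∀ (t : ℕ) (v : V),
      Phat src tgt Imp u t v =
        {l : List E | IsWalk src tgt u v l ∧ l.length = t ∧ Imp l.dropLast} := by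
  intro t
  induction t with
  | zero =>
    intro v
    ext l
    simp only [Phat, Set.mem_setOf_eq, List.length_eq_zero_iff]
    constructor
    · rintro ⟨rfl, rfl⟩; exact ⟨rfl, rfl, hnil⟩
    · rintro ⟨hw, rfl, -⟩; exact ⟨hw, rfl⟩
  | succ t ih =>
    intro v
    ext l
    simp only [Phat, Set.mem_setOf_eq, ih]
    constructor
    · rintro ⟨P, e, htgt, ⟨hw, hlen, -⟩, hImp, rfl⟩
      refine ⟨(isWalk_append_singleton src tgt u v P e).mpr ⟨hw, htgt⟩, ?_, ?_⟩
      · simp [hlen]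
      · simpa using hImp
    · rintro ⟨hw, hlen, hImp⟩
      rcases List.eq_nil_or_concat l with rfl | ⟨P, e, rfl⟩
      · simp at hlen
      · simp only [List.concat_eq_append] at hw hlen hImp
        rw [isWalk_append_singleton] at hw
        simp only [List.dropLast_concat] at hImp
        refine ⟨P, e, hw.2, ⟨hw.1, ?_, ?_⟩, hImp, List.concat_eq_append (as := P) (a := e)⟩
        · simpa using hlen
        · rcases List.eq_nil_or_concat P with rfl | ⟨Q, f, rfl⟩
          · simpa using hnil
          · simpa using hprefix _ _ (List.concat_eq_append (as := Q) (a := f) ▸ hImp)
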